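/- Let Y be a Markov chain with a σ-finite recurrent invariant measure μ, and let A be measurable with P_μ(Y_0 ∈ A^c, Y_1 ∈ A) > 0. Then the measures μ_A^entr := ∫_{A^c} P_x(Y_1 ∈ ·) μ(dx) on A and μ_{A^c}^exit(dx) := P_x(Y_1 ∈ A) μ(dx) on A^c assign zero mass to the complements of N_A, where N_A = {x : P_x(Y visits A i.o. and A^c i.o.) = 1}; i.e. μ_A^entr(A \ N_A) = 0 and μ_{A^c}^exit(A^c \ N_A) = 0. -/

import Mathlib

/-!
By recurrence, almost every point of a measurable set `D` returns to `D` infinitely often: the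
points of `D` from which a return may fail form a null set, which by invariance the chain a.s.
never visits, while a path visiting `D` only finitely often leaves `D` for good from a point of
that set. Applied to the sets `{x | 1/n ≤ P_x(Y₁ ∈ R)}`, and combined with a geometric-trials
argument, this shows that from almost every `x` with `P_x(Y₁ ∈ R) > 0` the chain visits `R`
infinitely often. For `R = A` and `D = Aᶜ`, almost every point of `Aᶜ` that can step into `A`
lies in `N_A`, which is the statement about the exit measure. For the entrance measure, let `E`
be the shift-invariant event of visiting both `A` and `Aᶜ` infinitely often, so `P_x(E) = 1`
for those `x`. If such an `x` could step with positive probability into `{y | P_y(E) ≤ b}`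
with `b < 1`, the chain would visit this set infinitely often, and from its first visit `E`
would have probability at most `b`.
-/

open MeasureTheory Set

/-- The set of starting points from which the chain a.s. visits both `A` and `Aᶜ`
infinitely often. -/
def NAset {X : Type*} [MeasurableSpace X] (P : X → Measure (ℕ → X)) (A : Set X) : Set X :=
  {x | P x {ω | {k | ω k ∈ A}.Infinite ∧ {k | ω k ∈ Aᶜ}.Infinite} = 1}

open Filter
open scoped ENNReal

section Probability

variable {α : Type*} [MeasurableSpace α] {ν : Measure α} [IsProbabilityMeasure ν] {s t : Set α}

lemma prob_eq_one_of_diff_eq_zero (hs : ν s = 1) (hst : ν (s \ t) = 0) : ν t = 1 :=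
  le_antisymm prob_le_one <| calc
    1 = ν s := hs.symm
    _ ≤ ν (s \ t) + ν t := (measure_mono (subset_sdiff_union s t)).trans (measure_union_le _ _)
    _ = ν t := by rw [hst, zero_add]

lemma prob_inter_eq_one (ht : MeasurableSet t) (hs1 : ν s = 1) (ht1 : ν t = 1) :
    ν (s ∩ t) = 1 :=
  prob_eq_one_of_diff_eq_zero hs1 <| measure_mono_null (fun _ h ht => h.2 ⟨h.1, ht⟩)
    ((prob_compl_eq_zero_iff ht).2 ht1)

end Probability

namespace MarkovChain

variable {X : Type*}

def shift (ω : ℕ → X) : ℕ → X := fun n => ω (n + 1)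

def infOften (C : Set X) : Set (ℕ → X) := {ω | {k | ω k ∈ C}.Infinite}

def hits (C : Set X) : Set (ℕ → X) := {ω | ∃ n, 1 ≤ n ∧ ω n ∈ C}

def hitsBy (C : Set X) (n : ℕ) : Set (ℕ → X) := {ω | ∃ m < n, ω (m + 1) ∈ C}

section Paths

variable {C D : Set X}

lemma shift_iterate_apply (k : ℕ) (ω : ℕ → X) (n : ℕ) : shift^[k] ω n = ω (n + k) := by
  induction k generalizing n with
  | zero => rfl
  | succ k ih => rw [Function.iterate_succ_apply', shift, ih, add_right_comm, add_assoc]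

lemma mem_infOften_iff_frequently {ω : ℕ → X} : ω ∈ infOften C ↔ ∃ᶠ n in atTop, ω n ∈ C :=
  Nat.frequently_atTop_iff_infinite.symm

lemma shift_iterate_preimage_infOften (C : Set X) (k : ℕ) :
    shift^[k] ⁻¹' infOften C = infOften C := by
  ext ω
  simp only [mem_preimage, mem_infOften_iff_frequently, shift_iterate_apply]
  rw [← frequently_map (m := fun n => n + k) (P := fun n => ω n ∈ C), map_add_atTop_eq_nat]

lemma shift_preimage_infOften (C : Set X) : shift ⁻¹' infOften C = infOften C :=
  shift_iterate_preimage_infOften C 1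

lemma infOften_mono (h : C ⊆ D) : infOften C ⊆ infOften D :=
  fun _ hω => hω.mono fun _ hk => h hk

lemma infOften_subset_hits (C : Set X) : infOften C ⊆ hits C := fun _ hω =>
  ((mem_infOften_iff_frequently.1 hω).and_eventually (eventually_ge_atTop 1)).exists.imp
    fun _ hn => ⟨hn.2, hn.1⟩

lemma hitsBy_zero (C : Set X) : hitsBy C 0 = ∅ := by
  simp [hitsBy]

lemma hitsBy_succ (C : Set X) (n : ℕ) :
    hitsBy C (n + 1) = shift ⁻¹' ({ω | ω 0 ∈ C} ∪ hitsBy C n) := by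
  ext ω
  simp only [hitsBy, mem_ofPred_eq, Nat.exists_lt_succ_left, mem_preimage, mem_union, shift]

lemma monotone_hitsBy (C : Set X) : Monotone (hitsBy C) :=
  fun _ _ hmn _ ⟨m, hm, hmC⟩ => ⟨m, hm.trans_le hmn, hmC⟩

lemma iUnion_hitsBy (C : Set X) : ⋃ n, hitsBy C n = hits C := by
  ext ω
  simp only [hitsBy, hits, mem_iUnion, mem_ofPred_eq]
  refine ⟨fun ⟨_, m, _, hm⟩ => ⟨m + 1, by omega, hm⟩, fun ⟨m, hm, hmC⟩ => ⟨m, m - 1, ?_, ?_⟩⟩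
  · omega
  · rwa [Nat.sub_add_cancel hm]

lemma eval_zero_mem_diff_infOften_subset (S : Set X) :
    {ω | ω 0 ∈ S} \ infOften S ⊆ ⋃ n, shift^[n] ⁻¹' ({ω | ω 0 ∈ S} \ hits S) := by
  rintro ω ⟨h0, hinf⟩
  obtain ⟨n, hn, hmax⟩ := exists_max_image _ id (not_infinite.1 hinf) ⟨0, h0⟩
  refine mem_iUnion.2 ⟨n, ?_, ?_⟩
  · simpa [shift_iterate_apply] using hn
  · rintro ⟨m, hm, hmS⟩
    rw [shift_iterate_apply] at hmS
    have := hmax _ hmS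
    simp only [id] at this
    omega

lemma infOften_diff_infOften_subset (S R : Set X) :
    infOften S \ infOften R ⊆ ⋃ n, shift^[n] ⁻¹' (infOften S \ hits R) := by
  rintro ω ⟨hS, hR⟩
  rw [mem_infOften_iff_frequently, not_frequently, eventually_atTop] at hR
  obtain ⟨N, hN⟩ := hR
  refine mem_iUnion.2 ⟨N, ?_, ?_⟩
  · rwa [← mem_preimage, shift_iterate_preimage_infOften]
  · rintro ⟨m, -, hm⟩
    rw [shift_iterate_apply] at hm
    exact hN (m + N) (by omega) hm

end Paths

section Measurability

variable [MeasurableSpace X] {C : Set X}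

lemma measurable_shift : Measurable (shift : (ℕ → X) → ℕ → X) :=
  measurable_pi_lambda _ fun n => measurable_pi_apply (n + 1)

lemma measurableSet_eval_mem (hC : MeasurableSet C) (n : ℕ) :
    MeasurableSet {ω : ℕ → X | ω n ∈ C} :=
  measurable_pi_apply n hC

lemma measurableSet_infOften (hC : MeasurableSet C) : MeasurableSet (infOften C) := by
  have : infOften C = limsup (fun n => {ω : ℕ → X | ω n ∈ C}) atTop := by
    ext ω
    rw [mem_limsup_iff_frequently_mem, mem_infOften_iff_frequently]
    rfl
  exact this ▸ MeasurableSet.measurableSet_limsup (measurableSet_eval_mem hC)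

lemma measurableSet_hits (hC : MeasurableSet C) : MeasurableSet (hits C) := by
  unfold hits; measurability

lemma measurableSet_hitsBy (hC : MeasurableSet C) (n : ℕ) : MeasurableSet (hitsBy C n) := by
  unfold hitsBy; measurability

lemma mem_NAset_iff {P : X → Measure (ℕ → X)} {A : Set X} {x : X} :
    x ∈ NAset P A ↔ P x (infOften A ∩ infOften Aᶜ) = 1 :=
  Iff.rfl

lemma measurableSet_NAset {P : X → Measure (ℕ → X)}
    (hmeas : ∀ B, MeasurableSet B → Measurable fun x => P x B) {A : Set X}
    (hA : MeasurableSet A) : MeasurableSet (NAset P A) :=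
  hmeas _ ((measurableSet_infOften hA).inter (measurableSet_infOften hA.compl))
    (measurableSet_singleton 1)

end Measurability

section Markov

variable [MeasurableSpace X]

noncomputable def transition (P : X → Measure (ℕ → X)) (x : X) : Measure X := (P x).map fun ω => ω 1

structure IsMarkovFamily (P : X → Measure (ℕ → X)) : Prop where
  start : ∀ x, P x {ω | ω 0 = x} = 1
  markov : ∀ x B, MeasurableSet B → P x (shift ⁻¹' B) = ∫⁻ y, P y B ∂transition P x

variable {P : X → Measure (ℕ → X)}

instance [∀ x, IsProbabilityMeasure (P x)] (x : X) : IsProbabilityMeasure (transition P x) :=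
  Measure.isProbabilityMeasure_map (measurable_pi_apply 1).aemeasurable

lemma transition_apply {C : Set X} (hC : MeasurableSet C) (x : X) :
    transition P x C = P x {ω | ω 1 ∈ C} :=
  Measure.map_apply (measurable_pi_apply 1) hC

lemma measurable_transition_apply (hmeas : ∀ B, MeasurableSet B → Measurable fun x => P x B)
    {C : Set X} (hC : MeasurableSet C) : Measurable fun x => transition P x C := by
  simp_rw [transition_apply hC]
  exact hmeas _ (measurableSet_eval_mem hC 1)

lemma measurable_transition (hmeas : ∀ B, MeasurableSet B → Measurable fun x => P x B) :
    Measurable (transition P) :=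
  Measure.measurable_of_measurable_coe _ fun _ => measurable_transition_apply hmeas

namespace IsMarkovFamily

variable (hP : IsMarkovFamily P)
include hP

lemma measure_shift_iterate_preimage_mono {B B' : Set (ℕ → X)} (hB : MeasurableSet B)
    (hB' : MeasurableSet B') (h : ∀ y, P y B ≤ P y B') (n : ℕ) (x : X) :
    P x (shift^[n] ⁻¹' B) ≤ P x (shift^[n] ⁻¹' B') := by
  induction n generalizing x with
  | zero => exact h x
  | succ n ih =>
    rw [Function.iterate_succ, preimage_comp, preimage_comp,
      hP.markov x _ (measurable_shift.iterate n hB), hP.markov x _ (measurable_shift.iterate n hB')]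
    exact lintegral_mono ih

variable [∀ x, IsProbabilityMeasure (P x)]

lemma measure_eval_zero_mem {C : Set X} (hC : MeasurableSet C) (x : X) :
    P x {ω | ω 0 ∈ C} = C.indicator 1 x := by
  have h_one : ∀ {D : Set X}, x ∈ D → P x {ω | ω 0 ∈ D} = 1 := fun hx =>
    le_antisymm prob_le_one <| (hP.start x).symm.le.trans <| measure_mono fun ω hω => by
      simp only [mem_ofPred_eq] at hω ⊢
      exact hω ▸ hx
  by_cases hx : x ∈ C
  · rw [indicator_of_mem hx, h_one hx, Pi.one_apply]
  · rw [indicator_of_notMem hx, ← prob_compl_eq_one_iff (measurableSet_eval_mem hC 0)]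
    exact h_one (D := Cᶜ) hx

lemma measure_inter_hits_le {E : Set (ℕ → X)} (hE : MeasurableSet E) (hEshift : E ⊆ shift ⁻¹' E)
    {T : Set X} (hT : MeasurableSet T) {b : ℝ≥0∞} (hb : ∀ y ∈ T, P y E ≤ b) (x : X) :
    P x (E ∩ hits T) ≤ b := by
  suffices h : ∀ n x, P x (E ∩ hitsBy T n) ≤ b by
    rw [← iUnion_hitsBy, inter_iUnion,
      Monotone.measure_iUnion fun _ _ hmn => inter_subset_inter_right E (monotone_hitsBy T hmn)]
    exact iSup_le fun n => h n x
  intro n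
  induction n with
  | zero => simp [hitsBy_zero]
  | succ n ih =>
    intro x
    have hy : ∀ y, P y (E ∩ ({ω | ω 0 ∈ T} ∪ hitsBy T n)) ≤ b := by
      intro y
      by_cases hyT : y ∈ T
      · exact (measure_mono inter_subset_left).trans (hb y hyT)
      · calc P y (E ∩ ({ω | ω 0 ∈ T} ∪ hitsBy T n))
            ≤ P y ({ω | ω 0 ∈ T} ∪ E ∩ hitsBy T n) := measure_mono fun ω ⟨h1, h2⟩ =>
              h2.imp id fun h2 => ⟨h1, h2⟩
          _ ≤ P y {ω | ω 0 ∈ T} + P y (E ∩ hitsBy T n) := measure_union_le _ _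
          _ ≤ b := by
            rw [hP.measure_eval_zero_mem hT, indicator_of_notMem hyT, zero_add]
            exact ih y
    have hB : MeasurableSet (E ∩ ({ω | ω 0 ∈ T} ∪ hitsBy T n)) :=
      hE.inter ((measurableSet_eval_mem hT 0).union (measurableSet_hitsBy hT n))
    calc P x (E ∩ hitsBy T (n + 1))
        ≤ P x (shift ⁻¹' (E ∩ ({ω | ω 0 ∈ T} ∪ hitsBy T n))) := by
          rw [hitsBy_succ]; exact measure_mono fun ω hω => ⟨hEshift hω.1, hω.2⟩
      _ = ∫⁻ y, P y (E ∩ ({ω | ω 0 ∈ T} ∪ hitsBy T n)) ∂transition P x := hP.markov x _ hB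
      _ ≤ ∫⁻ _, b ∂transition P x := lintegral_mono hy
      _ = b := by simp

/-- With `M` the supremum over starting points of this probability: one step from a point
of `S` avoids `R` with probability at most `1 - ε`, so `M ≤ (1 - ε) M`. -/
lemma measure_infOften_diff_hits_eq_zero {S R : Set X} (hS : MeasurableSet S)
    (hR : MeasurableSet R) {ε : ℝ≥0∞} (hε : ε ≠ 0) (hSR : ∀ y ∈ S, ε ≤ transition P y R)
    (x : X) : P x (infOften S \ hits R) = 0 := by
  set V := infOften S \ hits R
  have hV : MeasurableSet V := (measurableSet_infOften hS).diff (measurableSet_hits hR)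
  have hVshift : V ⊆ shift ⁻¹' ({ω | ω 0 ∈ Rᶜ} ∩ V) := by
    rintro ω ⟨hinf, hnot⟩
    refine ⟨fun h => hnot ⟨1, le_rfl, h⟩, ?_, fun ⟨n, _, h⟩ => hnot ⟨n + 1, by omega, h⟩⟩
    rwa [← mem_preimage, shift_preimage_infOften]
  set M := ⨆ z, P z V
  have hSV : ∀ y ∈ S, P y V ≤ (1 - ε) * M := by
    intro y hy
    have hz : ∀ z, P z ({ω | ω 0 ∈ Rᶜ} ∩ V) ≤ Rᶜ.indicator (fun _ => M) z := by
      intro z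
      by_cases hz : z ∈ Rᶜ
      · rw [indicator_of_mem hz]
        exact (measure_mono inter_subset_right).trans (le_iSup (fun z => P z V) z)
      · refine (measure_mono inter_subset_left).trans ?_
        rw [hP.measure_eval_zero_mem hR.compl, indicator_of_notMem hz, indicator_of_notMem hz]
    calc P y V ≤ P y (shift ⁻¹' ({ω | ω 0 ∈ Rᶜ} ∩ V)) := measure_mono hVshift
      _ = ∫⁻ z, P z ({ω | ω 0 ∈ Rᶜ} ∩ V) ∂transition P y :=
          hP.markov y _ ((measurableSet_eval_mem hR.compl 0).inter hV)
      _ ≤ ∫⁻ z, Rᶜ.indicator (fun _ => M) z ∂transition P y := lintegral_mono hz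
      _ = M * transition P y Rᶜ := lintegral_indicator_const hR.compl M
      _ ≤ M * (1 - ε) := by
          rw [prob_compl_eq_one_sub hR]
          gcongr
          exact hSR y hy
      _ = (1 - ε) * M := mul_comm _ _
  have hM : M ≤ (1 - ε) * M := iSup_le fun z => calc
    P z V = P z (V ∩ hits S) := by
      rw [inter_eq_left.2 (sdiff_subset.trans (infOften_subset_hits S))]
    _ ≤ (1 - ε) * M := hP.measure_inter_hits_le hV
      (hVshift.trans (preimage_mono inter_subset_right)) hS hSV z
  have hM0 : M = 0 := by
    by_contra hM0
    have hMtop : M ≠ ∞ := ne_top_of_le_ne_top ENNReal.one_ne_top (iSup_le fun _ => prob_le_one)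
    have h1ε : 1 - ε < 1 := ENNReal.sub_lt_self ENNReal.one_ne_top one_ne_zero hε
    exact (ENNReal.mul_lt_mul_right hM0 hMtop h1ε).not_ge (by simpa [mul_comm] using hM)
  exact nonpos_iff_eq_zero.1 ((le_iSup (fun z => P z V) x).trans hM0.le)

lemma measure_infOften_diff_infOften_eq_zero {S R : Set X} (hS : MeasurableSet S)
    (hR : MeasurableSet R) {ε : ℝ≥0∞} (hε : ε ≠ 0) (hSR : ∀ y ∈ S, ε ≤ transition P y R)
    (x : X) : P x (infOften S \ infOften R) = 0 := by
  have hV := (measurableSet_infOften hS).diff (measurableSet_hits hR)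
  refine measure_mono_null (infOften_diff_infOften_subset S R) (measure_iUnion_null fun n => ?_)
  refine nonpos_iff_eq_zero.1 ?_
  simpa using hP.measure_shift_iterate_preimage_mono hV MeasurableSet.empty
    (fun y => by simp [hP.measure_infOften_diff_hits_eq_zero hS hR hε hSR y]) n x

end IsMarkovFamily

end Markov

section Recurrence

variable [MeasurableSpace X]

def IsInvariant (μ : Measure X) (P : X → Measure (ℕ → X)) : Prop :=
  ∀ B : Set X, MeasurableSet B → ∫⁻ x, P x {ω | ω 1 ∈ B} ∂μ = μ B

def IsRecurrent (μ : Measure X) (P : X → Measure (ℕ → X)) : Prop :=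
  ∀ F : Set X, MeasurableSet F → μ F ≠ ∞ → ∀ᵐ x ∂μ.restrict F, P x (hits F) = 1

variable {μ : Measure X} {P : X → Measure (ℕ → X)}

lemma lintegral_lintegral_transition (hmeas : ∀ B, MeasurableSet B → Measurable fun x => P x B)
    (hinv : IsInvariant μ P) {g : X → ℝ≥0∞} (hg : Measurable g) :
    ∫⁻ x, ∫⁻ y, g y ∂transition P x ∂μ = ∫⁻ y, g y ∂μ := by
  have hκ := measurable_transition hmeas
  have hbind : μ.bind (transition P) = μ := by
    ext s hs
    rw [Measure.bind_apply hs hκ.aemeasurable]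
    simp_rw [transition_apply hs]
    exact hinv s hs
  conv_rhs => rw [← hbind]
  rw [Measure.lintegral_bind hκ.aemeasurable hg.aemeasurable]

namespace IsMarkovFamily

variable [∀ x, IsProbabilityMeasure (P x)] (hP : IsMarkovFamily P)
  (hmeas : ∀ B, MeasurableSet B → Measurable fun x => P x B) (hinv : IsInvariant μ P)
include hP hmeas hinv

lemma lintegral_measure_eval_mem {Z : Set X} (hZ : MeasurableSet Z) (n : ℕ) :
    ∫⁻ x, P x {ω | ω n ∈ Z} ∂μ = μ Z := by
  induction n with
  | zero => simp_rw [hP.measure_eval_zero_mem hZ, lintegral_indicator_one hZ]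
  | succ n ih =>
    have h : ∀ x, P x {ω | ω (n + 1) ∈ Z} = ∫⁻ y, P y {ω | ω n ∈ Z} ∂transition P x :=
      fun x => hP.markov x _ (measurableSet_eval_mem hZ n)
    rw [lintegral_congr h, lintegral_lintegral_transition hmeas hinv
      (hmeas _ (measurableSet_eval_mem hZ n)), ih]

lemma ae_forall_measure_eval_mem_eq_zero {Z : Set X} (hZ : MeasurableSet Z) (hZ0 : μ Z = 0) :
    ∀ᵐ x ∂μ, ∀ n, P x {ω | ω n ∈ Z} = 0 :=
  ae_all_iff.2 fun n => (lintegral_eq_zero_iff (hmeas _ (measurableSet_eval_mem hZ n))).1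
    (by rw [hP.lintegral_measure_eval_mem hmeas hinv hZ n, hZ0])

lemma ae_infOften_of_ae_hits {S : Set X} (hS : MeasurableSet S)
    (hret : ∀ᵐ x ∂μ.restrict S, P x (hits S) = 1) :
    ∀ᵐ x ∂μ, x ∈ S → P x (infOften S) = 1 := by
  rw [ae_restrict_iff' hS] at hret
  set Z := {y | y ∈ S ∧ P y (hits S) ≠ 1}
  have hZ : MeasurableSet Z :=
    hS.inter (hmeas _ (measurableSet_hits hS) (measurableSet_singleton 1)).compl
  have hZ0 : μ Z = 0 := by
    refine measure_mono_null ?_ (ae_iff.1 hret)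
    exact fun y hy hyS => hy.2 (hyS hy.1)
  have hlast : ∀ y, P y ({ω | ω 0 ∈ S} \ hits S) ≤ P y {ω | ω 0 ∈ Z} := by
    intro y
    rw [hP.measure_eval_zero_mem hZ]
    by_cases hyZ : y ∈ Z
    · rw [indicator_of_mem hyZ]; exact prob_le_one
    rw [indicator_of_notMem hyZ]
    by_cases hyS : y ∈ S
    · have hy : P y (hits S) = 1 := not_not.1 fun h => hyZ ⟨hyS, h⟩
      exact (measure_mono (sdiff_subset_compl _ _)).trans_eq
        ((prob_compl_eq_zero_iff (measurableSet_hits hS)).2 hy)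
    · refine (measure_mono sdiff_subset).trans_eq ?_
      rw [hP.measure_eval_zero_mem hS, indicator_of_notMem hyS]
  filter_upwards [hP.ae_forall_measure_eval_mem_eq_zero hmeas hinv hZ hZ0] with x hx hxS
  refine prob_eq_one_of_diff_eq_zero (s := {ω | ω 0 ∈ S}) ?_ ?_
  · rw [hP.measure_eval_zero_mem hS, indicator_of_mem hxS, Pi.one_apply]
  refine measure_mono_null (eval_zero_mem_diff_infOften_subset S)
    (measure_iUnion_null fun n => nonpos_iff_eq_zero.1 ?_)
  calc P x (shift^[n] ⁻¹' ({ω | ω 0 ∈ S} \ hits S))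
      ≤ P x (shift^[n] ⁻¹' {ω | ω 0 ∈ Z}) := hP.measure_shift_iterate_preimage_mono
        ((measurableSet_eval_mem hS 0).diff (measurableSet_hits hS))
        (measurableSet_eval_mem hZ 0) hlast n x
    _ = 0 := by
      simp only [preimage_ofPred_eq, shift_iterate_apply, zero_add]
      exact hx n

variable [SigmaFinite μ] (hrec : IsRecurrent μ P)
include hrec

lemma ae_infOften_self {D : Set X} (hD : MeasurableSet D) :
    ∀ᵐ x ∂μ, x ∈ D → P x (infOften D) = 1 := by
  have h : ∀ m, ∀ᵐ x ∂μ, x ∈ D ∩ spanningSets μ m →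
      P x (infOften (D ∩ spanningSets μ m)) = 1 := fun m =>
    have hDm := hD.inter (measurableSet_spanningSets μ m)
    hP.ae_infOften_of_ae_hits hmeas hinv hDm (hrec _ hDm
      (measure_ne_top_of_subset inter_subset_right (measure_spanningSets_lt_top μ m).ne))
  filter_upwards [ae_all_iff.2 h] with x hx hxD
  have hxm := hx _ ⟨hxD, mem_spanningSetsIndex μ x⟩
  exact le_antisymm prob_le_one (hxm.symm.le.trans (measure_mono (infOften_mono inter_subset_left)))

lemma ae_infOften_of_transition_pos {R : Set X} (hR : MeasurableSet R) :
    ∀ᵐ x ∂μ, 0 < transition P x R → P x (infOften R) = 1 := by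
  have hS : ∀ n : ℕ, MeasurableSet {x | (n : ℝ≥0∞)⁻¹ ≤ transition P x R} := fun n =>
    measurableSet_le measurable_const (measurable_transition_apply hmeas hR)
  filter_upwards [ae_all_iff.2 fun n => hP.ae_infOften_self hmeas hinv hrec (hS n)] with x hx hpos
  obtain ⟨n, hn⟩ := ENNReal.exists_inv_nat_lt hpos.ne'
  exact prob_eq_one_of_diff_eq_zero (hx n hn.le)
    (hP.measure_infOften_diff_infOften_eq_zero (hS n) hR
      (ENNReal.inv_ne_zero.2 (ENNReal.natCast_ne_top n)) (fun _ hy => hy) x)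

lemma ae_transition_setOf_lt_one_eq_zero {E : Set (ℕ → X)} (hE : MeasurableSet E)
    (hEshift : E ⊆ shift ⁻¹' E) :
    ∀ᵐ x ∂μ, P x E = 1 → transition P x {y | P y E < 1} = 0 := by
  set T : ℕ → Set X := fun n => {y | P y E < 1 - (n : ℝ≥0∞)⁻¹}
  have hT : ∀ n, MeasurableSet (T n) := fun n => measurableSet_lt (hmeas _ hE) measurable_const
  have hcover : {y | P y E < 1} ⊆ ⋃ n, T n := fun y hy => by
    obtain ⟨n, hn⟩ := ENNReal.exists_inv_nat_lt (tsub_pos_of_lt hy).ne'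
    exact mem_iUnion.2 ⟨n, lt_tsub_comm.1 hn⟩
  have hTn : ∀ n, ∀ᵐ x ∂μ, P x E = 1 → transition P x (T n) = 0 := by
    intro n
    filter_upwards [hP.ae_infOften_of_transition_pos hmeas hinv hrec (hT n)] with x hx hxE
    by_contra hne
    have hEinf : MeasurableSet (E ∩ infOften (T n)) := hE.inter (measurableSet_infOften (hT n))
    have h_one : P x (E ∩ infOften (T n)) = 1 :=
      prob_inter_eq_one (measurableSet_infOften (hT n)) hxE (hx (pos_iff_ne_zero.2 hne))
    have h_le : P x (E ∩ infOften (T n)) ≤ 1 - (n : ℝ≥0∞)⁻¹ := by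
      have hshift : E ∩ infOften (T n) ⊆ shift ⁻¹' (E ∩ infOften (T n)) := by
        rw [preimage_inter, shift_preimage_infOften]
        exact inter_subset_inter_left _ hEshift
      have := hP.measure_inter_hits_le hEinf hshift (hT n)
        (fun y hy => (measure_mono inter_subset_left).trans hy.le) x
      rwa [inter_eq_left.2 (inter_subset_right.trans (infOften_subset_hits _))] at this
    rw [h_one] at h_le
    exact h_le.not_gt (ENNReal.sub_lt_self ENNReal.one_ne_top one_ne_zero
      (ENNReal.inv_ne_zero.2 (ENNReal.natCast_ne_top n)))
  filter_upwards [ae_all_iff.2 hTn] with x hx hxE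
  exact measure_mono_null hcover (measure_iUnion_null fun n => hx n hxE)

lemma ae_mem_NAset_of_transition_pos {A : Set X} (hA : MeasurableSet A) :
    ∀ᵐ x ∂μ, x ∈ Aᶜ → 0 < transition P x A → x ∈ NAset P A := by
  filter_upwards [hP.ae_infOften_self hmeas hinv hrec hA.compl,
    hP.ae_infOften_of_transition_pos hmeas hinv hrec hA] with x hAc hA' hx hpos
  rw [mem_NAset_iff]
  exact prob_inter_eq_one (measurableSet_infOften hA.compl) (hA' hpos) (hAc hx)

lemma setLIntegral_transition_diff_NAset_eq_zero {A : Set X} (hA : MeasurableSet A) :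
    ∫⁻ x in Aᶜ, transition P x (A \ NAset P A) ∂μ = 0 := by
  have hNA := measurableSet_NAset hmeas hA
  have hE := (measurableSet_infOften hA).inter (measurableSet_infOften hA.compl)
  have hEshift : infOften A ∩ infOften Aᶜ ⊆ shift ⁻¹' (infOften A ∩ infOften Aᶜ) := by
    rw [preimage_inter, shift_preimage_infOften, shift_preimage_infOften]
  rw [setLIntegral_eq_zero_iff hA.compl
    (measurable_transition_apply hmeas (hA.diff hNA))]
  filter_upwards [hP.ae_mem_NAset_of_transition_pos hmeas hinv hrec hA,
    hP.ae_transition_setOf_lt_one_eq_zero hmeas hinv hrec hE hEshift] with x hentr hexit hx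
  rcases eq_or_ne (transition P x A) 0 with h | h
  · exact measure_mono_null sdiff_subset h
  · exact measure_mono_null (fun y hy => lt_of_le_of_ne prob_le_one hy.2)
      (hexit (hentr hx (pos_iff_ne_zero.2 h)))

lemma setLIntegral_compl_diff_NAset_transition_eq_zero {A : Set X} (hA : MeasurableSet A) :
    ∫⁻ x in Aᶜ \ NAset P A, transition P x A ∂μ = 0 := by
  rw [setLIntegral_eq_zero_iff (hA.compl.diff (measurableSet_NAset hmeas hA))
    (measurable_transition_apply hmeas hA)]
  filter_upwards [hP.ae_mem_NAset_of_transition_pos hmeas hinv hrec hA] with x hentr hx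
  exact not_not.1 fun h => hx.2 (hentr hx.1 (pos_iff_ne_zero.2 h))

end IsMarkovFamily

end Recurrence

end MarkovChain

theorem stmt18_general {X : Type*} [MeasurableSpace X] (μ : Measure X) [SigmaFinite μ]
    (P : X → Measure (ℕ → X)) [∀ x, IsProbabilityMeasure (P x)]
    (hmeas : ∀ B : Set (ℕ → X), MeasurableSet B → Measurable fun x => P x B)
    (hstart : ∀ x, P x {ω | ω 0 = x} = 1)
    (hMarkov : ∀ x, ∀ B : Set (ℕ → X), MeasurableSet B →
      P x ((fun ω n => ω (n + 1)) ⁻¹' B) = ∫⁻ y, P y B ∂((P x).map fun ω => ω 1))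
    (hinv : ∀ B : Set X, MeasurableSet B → ∫⁻ x, P x {ω | ω 1 ∈ B} ∂μ = μ B)
    (hrec : ∀ F : Set X, MeasurableSet F → μ F ≠ ⊤ →
      ∀ᵐ x ∂μ.restrict F, P x {ω | ∃ n, 1 ≤ n ∧ ω n ∈ F} = 1)
    (A : Set X) (hA : MeasurableSet A) :
    (∫⁻ x in Aᶜ, P x {ω | ω 1 ∈ A \ NAset P A} ∂μ = 0) ∧
    (∫⁻ x in Aᶜ \ NAset P A, P x {ω | ω 1 ∈ A} ∂μ = 0) := by
  have hP : MarkovChain.IsMarkovFamily P := ⟨hstart, hMarkov⟩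
  simp_rw [← MarkovChain.transition_apply hA,
    ← MarkovChain.transition_apply (hA.diff (MarkovChain.measurableSet_NAset hmeas hA))]
  exact ⟨hP.setLIntegral_transition_diff_NAset_eq_zero hmeas hinv hrec hA,
    hP.setLIntegral_compl_diff_NAset_transition_eq_zero hmeas hinv hrec hA⟩

/-- for a Markov chain with a σ-finite recurrent invariant measure `μ`
and a set `A` with `P_μ(Y₀ ∈ Aᶜ, Y₁ ∈ A) > 0`, the entrance measure
`μ_A^entr = ∫_{Aᶜ} P_x(Y₁ ∈ ·) dμ` on `A` and the exit measure
`μ_{Aᶜ}^exit(dx) = P_x(Y₁ ∈ A) μ(dx)` on `Aᶜ` vanish outside `N_A`. -/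
theorem stmt18 {X : Type*} [MeasurableSpace X] (μ : Measure X) [SigmaFinite μ]
    (P : X → Measure (ℕ → X)) [∀ x, IsProbabilityMeasure (P x)]
    (hmeas : ∀ B : Set (ℕ → X), MeasurableSet B → Measurable fun x => P x B)
    (hstart : ∀ x, P x {ω | ω 0 = x} = 1)
    (hMarkov : ∀ x, ∀ B : Set (ℕ → X), MeasurableSet B →
      P x ((fun ω n => ω (n + 1)) ⁻¹' B) = ∫⁻ y, P y B ∂((P x).map fun ω => ω 1))
    (hinv : ∀ B : Set X, MeasurableSet B → ∫⁻ x, P x {ω | ω 1 ∈ B} ∂μ = μ B)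
    (hrec : ∀ F : Set X, MeasurableSet F → μ F ≠ ⊤ →
      ∀ᵐ x ∂μ.restrict F, P x {ω | ∃ n, 1 ≤ n ∧ ω n ∈ F} = 1)
    (A : Set X) (hA : MeasurableSet A)
    (hpos : 0 < ∫⁻ x in Aᶜ, P x {ω | ω 1 ∈ A} ∂μ) :
    (∫⁻ x in Aᶜ, P x {ω | ω 1 ∈ A \ NAset P A} ∂μ = 0) ∧
    (∫⁻ x in Aᶜ \ NAset P A, P x {ω | ω 1 ∈ A} ∂μ = 0) :=
  stmt18_general μ P hmeas hstart hMarkov hinv hrec A hA
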